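/- arXiv:2412.04031 — 2 statements merged into one kernel-verified Lean document; each statement's English description precedes it below -/
import Mathlib

section
/- Fix γ ∈ (0, ln(3/2)) and let m₁ ≥ 1 be a real number. Define m₂ = ((m₁ − 1)·(sinh²γ − (2/3)sinh³γ) − 2·ln(m₁)) / (sinh²γ − sinh³γ). Then m₂ < 1.243·m₁. -/
/-! Write `s = sinh γ`; then `0 < s < sinh (log (3/2)) = 5/12`. The numerator coefficient
`s² - (2/3)s³` exceeds the denominator `s² - s³` by the factor `(1 - 2s/3)/(1 - s)`, which is
increasing in `s` and equals `26/21 < 1.243` at `s = 5/12`. Dropping the nonnegative term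
`2 log m₁` then gives `m₂ ≤ (m₁ - 1) · 1.243 < 1.243 · m₁`. -/

open Real

lemma sinh_lt_five_div_twelve {γ : ℝ} (h : γ < log (3 / 2)) : sinh γ < 5 / 12 := by
  have h' := sinh_lt_sinh.mpr h
  rw [sinh_log (by norm_num)] at h'
  norm_num at h'
  linarith

lemma sq_sub_two_thirds_mul_cube_le {s : ℝ} (hs : s ≤ 5 / 12) :
    s ^ 2 - 2 / 3 * s ^ 3 ≤ 1.243 * (s ^ 2 - s ^ 3) := by
  have key : 0 ≤ s ^ 2 * (0.243 - (1.243 - 2 / 3) * s) :=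
    mul_nonneg (sq_nonneg s) (by norm_num; linarith)
  linarith

lemma sq_sub_cube_pos {s : ℝ} (h0 : 0 < s) (h1 : s < 1) : 0 < s ^ 2 - s ^ 3 := by
  have : 0 < s ^ 2 * (1 - s) := mul_pos (pow_pos h0 2) (by linarith)
  linarith

theorem stmt_12 (γ : ℝ) (h0 : 0 < γ) (h1 : γ < Real.log (3 / 2))
    (m₁ : ℝ) (hm₁ : 1 ≤ m₁)
    (m₂ : ℝ)
    (hm₂ : m₂ = ((m₁ - 1) * (Real.sinh γ ^ 2 - (2 / 3) * Real.sinh γ ^ 3)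
        - 2 * Real.log m₁) / (Real.sinh γ ^ 2 - Real.sinh γ ^ 3)) :
    m₂ < 1.243 * m₁ := by
  set s := sinh γ
  have hs_lt : s < 5 / 12 := sinh_lt_five_div_twelve h1
  have hD : 0 < s ^ 2 - s ^ 3 := sq_sub_cube_pos (sinh_pos_iff.mpr h0) (by linarith)
  have hratio := mul_le_mul_of_nonneg_left (sq_sub_two_thirds_mul_cube_le hs_lt.le)
    (sub_nonneg.mpr hm₁)
  have hlog : 0 ≤ log m₁ := log_nonneg hm₁
  rw [hm₂, div_lt_iff₀ hD]
  calc (m₁ - 1) * (s ^ 2 - 2 / 3 * s ^ 3) - 2 * log m₁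
      ≤ (m₁ - 1) * (1.243 * (s ^ 2 - s ^ 3)) := by linarith
    _ < 1.243 * m₁ * (s ^ 2 - s ^ 3) := by linarith
end

section
/- Let y ∈ R^n be nonzero and δ ∈ R^n with ‖δ‖ < ‖y‖. Then y + δ ≠ 0 and cos(y, y + δ) ≥ 1 − ‖δ‖²/(2·‖y‖·(‖y‖ − ‖δ‖)). -/
open scoped RealInnerProductSpace

/-!
By the law of cosines `‖x - y‖² = ‖x‖² + ‖y‖² - 2⟪x, y⟫`, and AM–GM gives
`2‖x‖‖y‖ ≤ ‖x‖² + ‖y‖²`, so `⟪x, y⟫ ≥ ‖x‖‖y‖ - ‖x - y‖² / 2`. Applied to `y` and `y + δ`,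
whose difference has norm `‖δ‖`, and divided by `‖y‖‖y + δ‖`, this is the claim once
`‖y + δ‖` is bounded below by `‖y‖ - ‖δ‖ > 0`.
-/

section InnerProductSpace

variable {E : Type*} [NormedAddCommGroup E] [InnerProductSpace ℝ E]

theorem norm_mul_norm_sub_half_sq_le_inner (x y : E) :
    ‖x‖ * ‖y‖ - ‖x - y‖ ^ 2 / 2 ≤ ⟪x, y⟫ := by
  nlinarith [norm_sub_sq_real x y, sq_nonneg (‖x‖ - ‖y‖)]

theorem one_sub_div_le_inner_div_norm_mul_norm {x y : E} (hx : x ≠ 0) (hy : y ≠ 0) :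
    1 - ‖x - y‖ ^ 2 / (2 * ‖x‖ * ‖y‖) ≤ ⟪x, y⟫ / (‖x‖ * ‖y‖) := by
  have hxy : 0 < ‖x‖ * ‖y‖ := by positivity
  calc 1 - ‖x - y‖ ^ 2 / (2 * ‖x‖ * ‖y‖)
      = (‖x‖ * ‖y‖ - ‖x - y‖ ^ 2 / 2) / (‖x‖ * ‖y‖) := by field_simp
    _ ≤ ⟪x, y⟫ / (‖x‖ * ‖y‖) := by
      gcongr
      exact norm_mul_norm_sub_half_sq_le_inner x y

end InnerProductSpace

theorem stmt_18_general {n : ℕ} (y δ : EuclideanSpace ℝ (Fin n))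
    (h : ‖δ‖ < ‖y‖) :
    y + δ ≠ 0 ∧
    1 - ‖δ‖ ^ 2 / (2 * ‖y‖ * (‖y‖ - ‖δ‖)) ≤ ⟪y, y + δ⟫ / (‖y‖ * ‖y + δ‖) := by
  have hgap : 0 < ‖y‖ - ‖δ‖ := sub_pos.mpr h
  have hy : y ≠ 0 := norm_pos_iff.mp (hgap.trans_le (sub_le_self _ (norm_nonneg δ)))
  have hyδ : y + δ ≠ 0 := norm_pos_iff.mp (hgap.trans_le (norm_sub_le_norm_add y δ))
  refine ⟨hyδ, ?_⟩
  calc 1 - ‖δ‖ ^ 2 / (2 * ‖y‖ * (‖y‖ - ‖δ‖))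
      ≤ 1 - ‖y - (y + δ)‖ ^ 2 / (2 * ‖y‖ * ‖y + δ‖) := by
        rw [sub_add_cancel_left, norm_neg]
        gcongr
        exact norm_sub_le_norm_add y δ
    _ ≤ ⟪y, y + δ⟫ / (‖y‖ * ‖y + δ‖) := one_sub_div_le_inner_div_norm_mul_norm hy hyδ

theorem stmt_18 {n : ℕ} (y δ : EuclideanSpace ℝ (Fin n)) (hy : y ≠ 0)
    (h : ‖δ‖ < ‖y‖) :
    y + δ ≠ 0 ∧
    1 - ‖δ‖ ^ 2 / (2 * ‖y‖ * (‖y‖ - ‖δ‖)) ≤ ⟪y, y + δ⟫ / (‖y‖ * ‖y + δ‖) :=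
  stmt_18_general y δ h
end
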